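/- arXiv:2503.14790 — 5 statements merged into one kernel-verified Lean document; each statement's English description precedes it below -/
import Mathlib

section
/- Let N ≥ 2, let A be the (N−1)×N real matrix with A_{i,i} = 1, A_{i,i+1} = 1 and all other entries 0, let D be the (N−1)×N real matrix with D_{i,i} = 1, D_{i,i+1} = −1 and all other entries 0, let M̂ = diag(1/m_1, …, 1/m_N) with each m_i > 0, and set K = Aᵀ·(D·M̂·Dᵀ)⁻¹·D. Then the kernel of K is exactly the span of the all-ones vector 1_N, and K has rank N−1. -/
/-!
Both `A` and `D` are unit upper bidiagonal: row `i` is `eᵢ + c eᵢ₊₁`. Their leading square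
blocks are unitriangular, so their rows are linearly independent. Hence `Aᵀ` is injective and
`W = D M̂ Dᵀ` is positive definite, so `ker K = ker D`; and `D x = 0` says `xᵢ = xᵢ₊₁` for all
`i`, i.e. `x` is constant. Rank–nullity then gives the rank.
-/

open Matrix

namespace Matrix

variable {R : Type*} [CommRing R] {n : ℕ}

def upperBidiagonal (n : ℕ) (c : R) : Matrix (Fin n) (Fin (n + 1)) R :=
  of fun i => Pi.single i.castSucc 1 + Pi.single i.succ c

theorem upperBidiagonal_apply (c : R) (i : Fin n) (j : Fin (n + 1)) :
    upperBidiagonal n c i j = if (j : ℕ) = i then 1 else if (j : ℕ) = i + 1 then c else 0 := by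
  have : (i : ℕ) ≠ i + 1 := by omega
  simp only [upperBidiagonal, of_apply, Pi.add_apply, Pi.single_apply, Fin.ext_iff,
    Fin.val_castSucc, Fin.val_succ]
  split_ifs <;> simp_all

theorem upperBidiagonal_mulVec_apply (c : R) (x : Fin (n + 1) → R) (i : Fin n) :
    (upperBidiagonal n c *ᵥ x) i = x i.castSucc + c * x i.succ := by
  change (Pi.single i.castSucc 1 + Pi.single i.succ c) ⬝ᵥ x = _
  rw [add_dotProduct, single_dotProduct, single_dotProduct, one_mul]

theorem isUpperTriangular_upperBidiagonal_submatrix_castSucc (c : R) :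
    ((upperBidiagonal n c).submatrix id Fin.castSucc).IsUpperTriangular := by
  intro i j (hji : j < i)
  simp only [submatrix_apply, id_eq, upperBidiagonal_apply, Fin.val_castSucc]
  rw [if_neg (by omega), if_neg (by omega)]

theorem det_upperBidiagonal_submatrix_castSucc (c : R) :
    ((upperBidiagonal n c).submatrix id Fin.castSucc).det = 1 := by
  rw [det_of_isUpperTriangular (isUpperTriangular_upperBidiagonal_submatrix_castSucc c)]
  simp [upperBidiagonal_apply]

theorem upperBidiagonal_vecMul_injective (c : R) :
    Function.Injective (upperBidiagonal n c).vecMul := by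
  have hB : IsUnit ((upperBidiagonal n c).submatrix id Fin.castSucc) := by
    rw [isUnit_iff_isUnit_det, det_upperBidiagonal_submatrix_castSucc]
    exact isUnit_one
  intro y z hyz
  exact vecMul_injective_of_isUnit hB (funext fun j => congrFun hyz j.castSucc)

theorem ker_upperBidiagonal_neg_one :
    LinearMap.ker (upperBidiagonal n (-1 : R)).mulVecLin = Submodule.span R {fun _ => 1} := by
  ext x
  simp only [LinearMap.mem_ker, mulVecLin_apply, Submodule.mem_span_singleton]
  constructor
  · intro hx
    refine ⟨x 0, funext fun j => ?_⟩
    induction j using Fin.induction with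
    | zero => simp
    | succ i ih =>
      have := congrFun hx i
      rw [upperBidiagonal_mulVec_apply, Pi.zero_apply] at this
      simp only [Pi.smul_apply, smul_eq_mul, mul_one] at ih ⊢
      linear_combination ih + this
  · rintro ⟨a, rfl⟩
    funext i
    simp [upperBidiagonal_mulVec_apply]

theorem rank_eq_of_ker_eq_span_singleton {K m n : Type*} [Field K] [Fintype m] [Fintype n]
    (M : Matrix m n K) {v : n → K} (hv : v ≠ 0)
    (hM : LinearMap.ker M.mulVecLin = Submodule.span K {v}) :
    M.rank = Fintype.card n - 1 := by
  have := LinearMap.finrank_range_add_finrank_ker M.mulVecLin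
  rw [hM, finrank_span_singleton hv, Module.finrank_fintype_fun_eq_card] at this
  rw [rank]
  omega

end Matrix

/-- The kernel of the coupling matrix `K = Aᵀ (D Mhat Dᵀ)⁻¹ D` is exactly the span of
the all-ones vector, and `K` has rank `N - 1`. -/
theorem K_ker_and_rank (N : ℕ) (hN : 2 ≤ N)
    (A D : Matrix (Fin (N - 1)) (Fin N) ℝ)
    (hA : ∀ i j, A i j = if (j : ℕ) = (i : ℕ) then 1
      else if (j : ℕ) = (i : ℕ) + 1 then 1 else 0)
    (hD : ∀ i j, D i j = if (j : ℕ) = (i : ℕ) then 1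
      else if (j : ℕ) = (i : ℕ) + 1 then -1 else 0)
    (m : Fin N → ℝ) (hm : ∀ i, 0 < m i)
    (Mhat : Matrix (Fin N) (Fin N) ℝ)
    (hM : Mhat = Matrix.diagonal fun i => (m i)⁻¹)
    (K : Matrix (Fin N) (Fin N) ℝ)
    (hK : K = Aᵀ * (D * Mhat * Dᵀ)⁻¹ * D) :
    LinearMap.ker K.mulVecLin = Submodule.span ℝ {fun _ => (1 : ℝ)} ∧
      K.rank = N - 1 := by
  obtain ⟨n, rfl⟩ : ∃ n, N = n + 1 := ⟨N - 1, by omega⟩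
  have hA' : A = upperBidiagonal n 1 :=
    ext fun i j => (hA i j).trans (upperBidiagonal_apply 1 i j).symm
  have hD' : D = upperBidiagonal n (-1) :=
    ext fun i j => (hD i j).trans (upperBidiagonal_apply (-1) i j).symm
  have hW : (D * Mhat * Dᵀ).PosDef := by
    rw [hM, hD']
    exact (PosDef.diagonal fun i => inv_pos.2 (hm i)).mul_mul_conjTranspose_same
      (upperBidiagonal_vecMul_injective (-1))
  have hAW : LinearMap.ker (Aᵀ * (D * Mhat * Dᵀ)⁻¹).mulVecLin = ⊥ := by
    rw [mulVecLin_mul, LinearMap.ker_eq_bot, LinearMap.coe_comp, mulVecLin_transpose, hA']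
    exact (upperBidiagonal_vecMul_injective 1).comp (mulVec_injective_of_isUnit hW.inv.isUnit)
  have hker : LinearMap.ker K.mulVecLin = Submodule.span ℝ {fun _ => (1 : ℝ)} := by
    rw [hK, mulVecLin_mul, LinearMap.ker_comp_of_ker_eq_bot _ hAW, hD',
      ker_upperBidiagonal_neg_one]
  refine ⟨hker, ?_⟩
  simpa using rank_eq_of_ker_eq_span_singleton K (Function.ne_iff.2 ⟨0, one_ne_zero⟩) hker
end

section
/- Let N ≥ 2, let A be the (N−1)×N real matrix with A_{i,i} = 1, A_{i,i+1} = 1 and all other entries 0, let D be the (N−1)×N real matrix with D_{i,i} = 1, D_{i,i+1} = −1 and all other entries 0, let M̂ = diag(1/m_1, …, 1/m_N) with each m_i > 0, and set K = Aᵀ·(D·M̂·Dᵀ)⁻¹·D. Then K has no row consisting entirely of zeros and no column consisting entirely of zeros. -/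
/-!
With `L = D M̂ Dᵀ` we have `K = Aᵀ L⁻¹ D`. The matrices `A` and `D` are bidiagonal with unit
diagonal, so their rows are linearly independent, and for `N ≥ 2` neither has a zero column. As `M̂`
is positive definite and `Dᵀ` is injective, `L` is positive definite, hence invertible. Row `i` of
`K` is `(Aᵀ i) L⁻¹ D`, which can only vanish if column `i` of `A` does, since `L⁻¹ D` has
independent rows; transposing, column `j` of `K` vanishes only if column `j` of `D` does.
-/

open Matrix

def bidiagonal {R : Type*} [Zero R] [One R] (N : ℕ) (c : R) : Matrix (Fin (N - 1)) (Fin N) R :=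
  of fun i j => if (j : ℕ) = i then 1 else if (j : ℕ) = i + 1 then c else 0

namespace bidiagonal

variable {R : Type*} {N : ℕ}

theorem isUpperTriangular_submatrix_castLE [Zero R] [One R] (c : R) :
    ((bidiagonal N c).submatrix id (Fin.castLE (Nat.sub_le N 1))).IsUpperTriangular := by
  intro i j hji
  have : (j : ℕ) < i := hji
  simp only [submatrix_apply, id, bidiagonal, of_apply, Fin.val_castLE]
  rw [if_neg (by omega), if_neg (by omega)]

theorem vecMul_injective [Field R] (c : R) : Function.Injective (bidiagonal N c).vecMul := by
  set S := (bidiagonal N c).submatrix id (Fin.castLE (Nat.sub_le N 1))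
  have hdet : S.det = 1 := by
    rw [det_of_isUpperTriangular (isUpperTriangular_submatrix_castLE c)]
    exact Finset.prod_eq_one fun i _ => by simp [bidiagonal]
  have hS : Function.Injective S.vecMul :=
    vecMul_injective_iff_isUnit.mpr (by rw [isUnit_iff_isUnit_det, hdet]; exact isUnit_one)
  exact Function.Injective.of_comp (f := (· ∘ Fin.castLE (Nat.sub_le N 1))) hS

theorem exists_ne_zero [Zero R] [One R] [NeZero (1 : R)] (hN : 2 ≤ N) {c : R} (hc : c ≠ 0)
    (j : Fin N) : ∃ i, bidiagonal N c i j ≠ 0 := by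
  by_cases hj : (j : ℕ) < N - 1
  · exact ⟨⟨j, hj⟩, by simp [bidiagonal]⟩
  · refine ⟨⟨N - 2, by omega⟩, ?_⟩
    simp only [bidiagonal, of_apply]
    rw [if_neg (by omega), if_pos (by omega)]
    exact hc

end bidiagonal

theorem posDef_mul_diagonal_mul_transpose {m n : Type*} [Fintype m] [Fintype n] [DecidableEq n]
    {B : Matrix m n ℝ} (hB : Function.Injective B.vecMul) {d : n → ℝ} (hd : ∀ i, 0 < d i) :
    (B * diagonal d * Bᵀ).PosDef := by
  simpa only [conjTranspose_eq_transpose_of_trivial] using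
    (PosDef.diagonal hd).mul_mul_conjTranspose_same hB

section TransposeMulNonsingInvMul

variable {R : Type*} [CommRing R] {l m n : Type*} [Fintype m] [DecidableEq m]
  {L : Matrix m m R} {Q : Matrix m l R} {P : Matrix m n R}

theorem exists_transpose_mul_nonsing_inv_mul_row_ne_zero (hL : IsUnit L.det)
    (hQ : ∀ j, ∃ i, Q i j ≠ 0) (hP : Function.Injective P.vecMul) (j : l) :
    ∃ k, (Qᵀ * L⁻¹ * P) j k ≠ 0 := by
  by_contra! h
  have hinj : Function.Injective fun x => x ᵥ* L⁻¹ ᵥ* P :=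
    hP.comp <| vecMul_injective_of_isUnit <|
      isUnit_nonsing_inv_iff.mpr <| (isUnit_iff_isUnit_det L).mpr hL
  have hcol : Qᵀ j = 0 := hinj <| by
    show Qᵀ j ᵥ* L⁻¹ ᵥ* P = 0 ᵥ* L⁻¹ ᵥ* P
    rw [zero_vecMul, zero_vecMul, ← mul_apply_eq_vecMul, ← mul_apply_eq_vecMul]
    exact funext h
  obtain ⟨i, hi⟩ := hQ j
  exact hi (congrFun hcol i)

theorem exists_transpose_mul_nonsing_inv_mul_col_ne_zero (hL : IsUnit L.det)
    (hP : ∀ j, ∃ i, P i j ≠ 0) (hQ : Function.Injective Q.vecMul) (j : n) :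
    ∃ k, (Qᵀ * L⁻¹ * P) k j ≠ 0 := by
  have htr : (Qᵀ * L⁻¹ * P)ᵀ = Pᵀ * Lᵀ⁻¹ * Q := by
    rw [transpose_mul, transpose_mul, transpose_transpose, transpose_nonsing_inv, Matrix.mul_assoc]
  simpa only [← htr, transpose_apply] using
    exists_transpose_mul_nonsing_inv_mul_row_ne_zero (isUnit_det_transpose L hL) hP hQ j

end TransposeMulNonsingInvMul

/-- The coupling matrix `K = Aᵀ (D Mhat Dᵀ)⁻¹ D` has no zero row and no zero column. -/
theorem K_no_zero_row_col (N : ℕ) (hN : 2 ≤ N)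
    (A D : Matrix (Fin (N - 1)) (Fin N) ℝ)
    (hA : ∀ i j, A i j = if (j : ℕ) = (i : ℕ) then 1
      else if (j : ℕ) = (i : ℕ) + 1 then 1 else 0)
    (hD : ∀ i j, D i j = if (j : ℕ) = (i : ℕ) then 1
      else if (j : ℕ) = (i : ℕ) + 1 then -1 else 0)
    (m : Fin N → ℝ) (hm : ∀ i, 0 < m i)
    (Mhat : Matrix (Fin N) (Fin N) ℝ)
    (hM : Mhat = Matrix.diagonal fun i => (m i)⁻¹)
    (K : Matrix (Fin N) (Fin N) ℝ)
    (hK : K = Aᵀ * (D * Mhat * Dᵀ)⁻¹ * D) :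
    (∀ i, ∃ j, K i j ≠ 0) ∧ (∀ j, ∃ i, K i j ≠ 0) := by
  have hAb : A = bidiagonal N 1 := ext hA
  have hDb : D = bidiagonal N (-1) := ext hD
  have hDinj : Function.Injective D.vecMul := hDb ▸ bidiagonal.vecMul_injective _
  have hL : IsUnit (D * Mhat * Dᵀ).det := by
    rw [← isUnit_iff_isUnit_det, hM]
    exact (posDef_mul_diagonal_mul_transpose hDinj fun i => inv_pos.mpr (hm i)).isUnit
  subst hK
  exact ⟨exists_transpose_mul_nonsing_inv_mul_row_ne_zero hL
      (hAb ▸ bidiagonal.exists_ne_zero hN one_ne_zero) hDinj,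
    exists_transpose_mul_nonsing_inv_mul_col_ne_zero hL
      (hDb ▸ bidiagonal.exists_ne_zero hN (neg_ne_zero.mpr one_ne_zero))
      (hAb ▸ bidiagonal.vecMul_injective _)⟩
end

section
/- Let θ, ψ ∈ ℝ^N, u ∈ ℝ^N, f_x, f_y ∈ ℝ^N, and m_1, …, m_N > 0. Set M̂ = diag(1/m_1, …, 1/m_N), S' = diag(sin(θ_i + ψ_i)), C' = diag(cos(θ_i + ψ_i)), U = diag(u_1, …, u_N), Δ_1 = the 2N×N matrix stacking −M̂·S'·U on top of M̂·C'·U, and Δ_2 = the 2N×N matrix stacking diag(f_{x,i} + cos(θ_i + ψ_i)·u_i) on top of diag(f_{y,i} + sin(θ_i + ψ_i)·u_i). Then the 2N×2N matrix Ω₁ = [Δ_1 Δ_2] (the block matrix [[−M̂S'U, diag(f_x + C'u)], [M̂C'U, diag(f_y + S'u)]]) has determinant det(Ω₁) = ∏_{i=1}^{N} (−1/m_i)·u_i·(u_i + cos(θ_i + ψ_i)·f_{x,i} + sin(θ_i + ψ_i)·f_{y,i}). -/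
open Matrix

private def sumFinEquiv (N : ℕ) : (Fin N ⊕ Fin N) ≃ Fin 2 × Fin N where
  toFun := Sum.elim (fun i => (0, i)) (fun i => (1, i))
  invFun := fun p => if p.1 = 0 then Sum.inl p.2 else Sum.inr p.2
  left_inv := by rintro (i | i) <;> simp
  right_inv := by
    rintro ⟨k, i⟩
    fin_cases k <;> simp

private lemma det_fromBlocks_diagonal {N : ℕ} (a b c d : Fin N → ℝ) :
    (Matrix.fromBlocks (Matrix.diagonal a) (Matrix.diagonal b)
      (Matrix.diagonal c) (Matrix.diagonal d)).det = ∏ i, (a i * d i - b i * c i) := by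
  have h : Matrix.fromBlocks (Matrix.diagonal a) (Matrix.diagonal b)
      (Matrix.diagonal c) (Matrix.diagonal d) =
      (Matrix.blockDiagonal (fun i => !![a i, b i; c i, d i])).submatrix
        (sumFinEquiv N) (sumFinEquiv N) := by
    ext x y
    rcases x with i | i <;> rcases y with j | j <;>
      simp [sumFinEquiv, Matrix.blockDiagonal_apply, Matrix.diagonal_apply, eq_comm] <;>
      rcases eq_or_ne i j with h | h <;> simp [h]
  rw [h, Matrix.det_submatrix_equiv_self, Matrix.det_blockDiagonal]
  simp [Matrix.det_fin_two_of]

/-- Determinant of the observability block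
`Ω₁ = [[-Mhat S' U, diag (f_x + C' u)], [Mhat C' U, diag (f_y + S' u)]]`:
`det Ω₁ = ∏ i, (-1/mᵢ) uᵢ (uᵢ + cos (θᵢ + ψᵢ) f_{x,i} + sin (θᵢ + ψᵢ) f_{y,i})`. -/
theorem Omega1_det (N : ℕ) (θ ψ u fx fy : Fin N → ℝ)
    (m : Fin N → ℝ) (hm : ∀ i, 0 < m i)
    (Mhat S' C' U : Matrix (Fin N) (Fin N) ℝ)
    (hM : Mhat = Matrix.diagonal fun i => (m i)⁻¹)
    (hS : S' = Matrix.diagonal fun i => Real.sin (θ i + ψ i))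
    (hC : C' = Matrix.diagonal fun i => Real.cos (θ i + ψ i))
    (hU : U = Matrix.diagonal u)
    (Ω₁ : Matrix (Fin N ⊕ Fin N) (Fin N ⊕ Fin N) ℝ)
    (hΩ : Ω₁ = Matrix.fromBlocks
      (-(Mhat * S' * U)) (Matrix.diagonal fun i => fx i + Real.cos (θ i + ψ i) * u i)
      (Mhat * C' * U) (Matrix.diagonal fun i => fy i + Real.sin (θ i + ψ i) * u i)) :
    Ω₁.det = ∏ i : Fin N,
      (-(m i)⁻¹) * u i *
        (u i + Real.cos (θ i + ψ i) * fx i + Real.sin (θ i + ψ i) * fy i) := by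
  subst hM hS hC hU hΩ
  rw [Matrix.diagonal_mul_diagonal, Matrix.diagonal_mul_diagonal, Matrix.diagonal_mul_diagonal,
    Matrix.diagonal_mul_diagonal, Matrix.diagonal_neg, det_fromBlocks_diagonal]
  refine Finset.prod_congr rfl fun i _ => ?_
  have h := Real.sin_sq_add_cos_sq (θ i + ψ i)
  linear_combination (-(m i)⁻¹ * u i ^ 2) * h
end

section
/- Let θ, ψ ∈ ℝ^N, u ∈ ℝ^N, f_x, f_y ∈ ℝ^N, and m_1, …, m_N > 0, and let Ω₁ be the 2N×2N block matrix [[−M̂S'U, diag(f_x + C'u)], [M̂C'U, diag(f_y + S'u)]] with M̂ = diag(1/m_i), S' = diag(sin(θ_i + ψ_i)), C' = diag(cos(θ_i + ψ_i)), U = diag(u_i). Then Ω₁ is invertible if and only if for every i = 1, …, N both u_i ≠ 0 and u_i + cos(θ_i + ψ_i)·f_{x,i} + sin(θ_i + ψ_i)·f_{y,i} ≠ 0. -/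
open Matrix

/-! Each pair of rows and columns `(inl i, inr i)` of `Ω₁` only meets itself, so after
reordering `Ω₁` is block diagonal with `2 × 2` blocks and its determinant is the product of
their determinants. By `sin² + cos² = 1` the block of link `i` has determinant
`-(uᵢ / mᵢ) (uᵢ + cos (θᵢ + ψᵢ) f_{x,i} + sin (θᵢ + ψᵢ) f_{y,i})`. -/

theorem Matrix.det_fromBlocks_diagonal {n R : Type*} [Fintype n] [DecidableEq n] [CommRing R]
    (a b c d : n → R) :
    (fromBlocks (diagonal a) (diagonal b) (diagonal c) (diagonal d)).det =
      ∏ i, (a i * d i - b i * c i) := by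
  let e : Fin 2 × n ≃ n ⊕ n :=
    (finTwoEquiv.prodCongr (Equiv.refl n)).trans (Equiv.boolProdEquivSum n)
  have h_reindex : fromBlocks (diagonal a) (diagonal b) (diagonal c) (diagonal d) =
      (blockDiagonal fun i => !![a i, b i; c i, d i]).submatrix e.symm e.symm := by
    ext (i | i) (j | j) <;>
      simp [e, blockDiagonal_apply, diagonal_apply, finTwoEquiv, Equiv.boolProdEquivSum,
        eq_comm, -Bool.true_eq]
  rw [h_reindex, det_submatrix_equiv_self, det_blockDiagonal]
  exact Finset.prod_congr rfl fun i _ => det_fin_two_of _ _ _ _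

theorem link_block_det_eq (m u fx fy φ : ℝ) :
    -(m⁻¹ * Real.sin φ * u) * (fy + Real.sin φ * u) -
        (fx + Real.cos φ * u) * (m⁻¹ * Real.cos φ * u) =
      -(m⁻¹ * u * (u + Real.cos φ * fx + Real.sin φ * fy)) := by
  linear_combination (-m⁻¹ * u ^ 2) * Real.sin_sq_add_cos_sq φ

theorem link_block_det_ne_zero_iff {m : ℝ} (hm : m ≠ 0) (u fx fy φ : ℝ) :
    -(m⁻¹ * Real.sin φ * u) * (fy + Real.sin φ * u) -
        (fx + Real.cos φ * u) * (m⁻¹ * Real.cos φ * u) ≠ 0 ↔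
      u ≠ 0 ∧ u + Real.cos φ * fx + Real.sin φ * fy ≠ 0 := by
  rw [link_block_det_eq, neg_ne_zero, mul_ne_zero_iff, mul_ne_zero_iff, and_assoc,
    and_iff_right (inv_ne_zero hm)]

/-- The observability block `Ω₁` is invertible if and only if, for every link `i`, the
thruster force is non-zero (`uᵢ ≠ 0`) and the net force is non-zero
(`uᵢ + cos (θᵢ + ψᵢ) f_{x,i} + sin (θᵢ + ψᵢ) f_{y,i} ≠ 0`). -/
theorem Omega1_isUnit_iff (N : ℕ) (θ ψ u fx fy : Fin N → ℝ)
    (m : Fin N → ℝ) (hm : ∀ i, 0 < m i)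
    (Mhat S' C' U : Matrix (Fin N) (Fin N) ℝ)
    (hM : Mhat = Matrix.diagonal fun i => (m i)⁻¹)
    (hS : S' = Matrix.diagonal fun i => Real.sin (θ i + ψ i))
    (hC : C' = Matrix.diagonal fun i => Real.cos (θ i + ψ i))
    (hU : U = Matrix.diagonal u)
    (Ω₁ : Matrix (Fin N ⊕ Fin N) (Fin N ⊕ Fin N) ℝ)
    (hΩ : Ω₁ = Matrix.fromBlocks
      (-(Mhat * S' * U)) (Matrix.diagonal fun i => fx i + Real.cos (θ i + ψ i) * u i)
      (Mhat * C' * U) (Matrix.diagonal fun i => fy i + Real.sin (θ i + ψ i) * u i)) :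
    IsUnit Ω₁ ↔ ∀ i, u i ≠ 0 ∧
      u i + Real.cos (θ i + ψ i) * fx i + Real.sin (θ i + ψ i) * fy i ≠ 0 := by
  subst hΩ hM hS hC hU
  simp only [diagonal_mul_diagonal, diagonal_neg]
  rw [isUnit_iff_isUnit_det, det_fromBlocks_diagonal, isUnit_iff_ne_zero,
    Finset.prod_ne_zero_iff]
  simp only [Finset.mem_univ, forall_const]
  exact forall_congr' fun i => link_block_det_ne_zero_iff (hm i).ne' _ _ _ _
end

section
/- Let B be an N×N real matrix and let Ω₂ be the N²×N real matrix formed by vertically stacking, for i = 1, …, N, the diagonal matrices diag(B·e_i), where B·e_i is the i-th column of B; equivalently, the ((i−1)N + r, c) entry of Ω₂ is B_{r,i} if r = c and 0 otherwise. Then Ω₂ has full column rank N (trivial kernel as a linear map ℝ^N → ℝ^{N²}) if and only if B has no row consisting entirely of zeros. -/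
open Matrix

/-- The `N² × N` matrix `Ω₂`, obtained by stacking the diagonal matrices
`diag (B eᵢ)` for `i = 1, …, N` (rows indexed by pairs `(i, r)`, with entry `B r i`
when `r = c` and `0` otherwise), has full column rank (trivial kernel) if and only if
`B` has no row consisting entirely of zeros. -/
theorem Omega2_fullColumnRank_iff (N : ℕ) (B : Matrix (Fin N) (Fin N) ℝ)
    (Ω₂ : Matrix (Fin N × Fin N) (Fin N) ℝ)
    (hΩ : ∀ i r c, Ω₂ (i, r) c = if r = c then B r i else 0) :
    LinearMap.ker Ω₂.mulVecLin = ⊥ ↔ ∀ r, ∃ c, B r c ≠ 0 := by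
  have key : ∀ (x : Fin N → ℝ) i r, Ω₂.mulVec x (i, r) = B r i * x r := by
    intro x i r
    simp only [mulVec, dotProduct, hΩ]
    rw [Finset.sum_eq_single r]
    · simp
    · intro c _ hc; simp [Ne.symm hc]
    · simp
  constructor
  · intro h r
    by_contra hc
    push_neg at hc
    have hx : (Pi.single r 1 : Fin N → ℝ) ∈ LinearMap.ker Ω₂.mulVecLin := by
      rw [LinearMap.mem_ker]
      funext ⟨i, s⟩
      show Ω₂.mulVec _ (i, s) = 0
      rw [key]
      rcases eq_or_ne s r with rfl | hs
      · simp [hc i]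
      · simp [Pi.single_eq_of_ne hs]
    rw [h, Submodule.mem_bot] at hx
    have := congrFun hx r
    simp at this
  · intro h
    rw [LinearMap.ker_eq_bot']
    intro x hx
    funext r
    obtain ⟨c, hc⟩ := h r
    have := congrFun hx (c, r)
    rw [show Ω₂.mulVecLin x = Ω₂.mulVec x from rfl] at this
    rw [key] at this
    simp only [Pi.zero_apply] at this
    exact (mul_eq_zero.mp this).resolve_left hc
end
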